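/- Define ψ : ℝ → ℝ by ψ(u) = (td(u) − 1)/u for u ≠ 0 and ψ(0) = −1/2. For all x_1, x_2, t ∈ ℝ, the 2nd Taylor coefficient at ε = 0 of the smooth function ε ↦ td(εx_1) · td(εx_2) · ψ(εt) equals −( e_1(x)² + e_2(x) + e_1(x)·t ) / 24, where e_1(x) = x_1 + x_2 and e_2(x) = x_1 x_2. -/

import Mathlib

noncomputable def td (u : ℝ) : ℝ := if u = 0 then 1 else u / (Real.exp u - 1)

/-- `ψ(u) = (td(u) − 1)/u` for `u ≠ 0`, and `ψ(0) = −1/2`. -/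
noncomputable def psi (u : ℝ) : ℝ := if u = 0 then -1 / 2 else (td u - 1) / u

/-!
Write `exp u = 1 + u + u² h(u)` with `h` analytic and `h(u) = 1/2 + u/6 + u²/24 + O(u³)`.
Then `td = (1 + u h)⁻¹` and `ψ = -h (1 + u h)⁻¹` on all of `ℝ`, the junk values at `0` included,
so `td` and `ψ` have second-order jets at `0` with analytic remainders:
`td u = 1 - u/2 + u²/12 + O(u³)` and `ψ u = -1/2 + u/12 + O(u³)`. Such jets rescale and multiply
like truncated power series, and the second derivative at `0` of `a + b z + c z² + z³ F(z)` is
`2c`, because `z³ F(z)` has analytic order at least `3`.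
-/

open Filter Topology

section QuadraticJet

variable {𝕜 : Type*} [NontriviallyNormedField 𝕜] {f g : 𝕜 → 𝕜} {a b c a' b' c' : 𝕜}

def HasQuadraticJet (f : 𝕜 → 𝕜) (a b c : 𝕜) : Prop :=
  ∃ F : 𝕜 → 𝕜, AnalyticAt 𝕜 F 0 ∧ f =ᶠ[𝓝 0] fun z => a + b * z + c * z ^ 2 + z ^ 3 * F z

namespace HasQuadraticJet

theorem analyticAt (hf : HasQuadraticJet f a b c) : AnalyticAt 𝕜 f 0 := by
  obtain ⟨F, hF, hfF⟩ := hf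
  exact AnalyticAt.congr (by fun_prop) hfF.symm

theorem apply_zero (hf : HasQuadraticJet f a b c) : f 0 = a := by
  obtain ⟨F, -, hfF⟩ := hf
  simpa using hfF.self_of_nhds

theorem neg (hf : HasQuadraticJet f a b c) : HasQuadraticJet (fun z => -f z) (-a) (-b) (-c) := by
  obtain ⟨F, hF, hfF⟩ := hf
  refine ⟨fun z => -F z, by fun_prop, ?_⟩
  filter_upwards [hfF] with z hfz
  rw [hfz]
  ring

theorem const_add_id_mul (hf : HasQuadraticJet f a b c) (d : 𝕜) :
    HasQuadraticJet (fun z => d + z * f z) d a b := by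
  obtain ⟨F, hF, hfF⟩ := hf
  refine ⟨fun z => c + z * F z, by fun_prop, ?_⟩
  filter_upwards [hfF] with z hfz
  rw [hfz]
  ring

theorem mul (hf : HasQuadraticJet f a b c) (hg : HasQuadraticJet g a' b' c') :
    HasQuadraticJet (fun z => f z * g z) (a * a') (a * b' + b * a') (a * c' + b * b' + c * a') := by
  obtain ⟨F, hF, hfF⟩ := hf
  obtain ⟨G, hG, hgG⟩ := hg
  refine ⟨fun z => b * c' + c * b' + c * c' * z + (a + b * z + c * z ^ 2) * G z
    + F z * (a' + b' * z + c' * z ^ 2 + z ^ 3 * G z), by fun_prop, ?_⟩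
  filter_upwards [hfF, hgG] with z hfz hgz
  rw [hfz, hgz]
  ring

theorem inv (hf : HasQuadraticJet f a b c) (ha : a ≠ 0) :
    HasQuadraticJet (fun z => (f z)⁻¹) a⁻¹ (-b / a ^ 2) ((b ^ 2 - a * c) / a ^ 3) := by
  have hf_ne : ∀ᶠ z in 𝓝 0, f z ≠ 0 :=
    hf.analyticAt.continuousAt.eventually_ne (hf.apply_zero ▸ ha)
  have hf_inv : AnalyticAt 𝕜 (fun z => (f z)⁻¹) 0 := hf.analyticAt.inv (hf.apply_zero ▸ ha)
  obtain ⟨F, hF, hfF⟩ := hf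
  set b₁ := -b / a ^ 2
  set c₁ := (b ^ 2 - a * c) / a ^ 3
  -- With `P = a⁻¹ + b₁ z + c₁ z²`, `f⁻¹ - P = (1 - P f) / f`
  -- and `1 - P f = -z³ (b c₁ + c b₁ + c c₁ z + P F)`.
  refine ⟨fun z => -(b * c₁ + c * b₁ + c * c₁ * z + (a⁻¹ + b₁ * z + c₁ * z ^ 2) * F z) * (f z)⁻¹,
    by fun_prop, ?_⟩
  filter_upwards [hfF, hf_ne] with z hfz hz
  field_simp
  rw [hfz]
  simp only [b₁, c₁]
  field_simp
  ring

theorem comp_mul_const (hf : HasQuadraticJet f a b c) (x : 𝕜) :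
    HasQuadraticJet (fun z => f (z * x)) a (b * x) (c * x ^ 2) := by
  obtain ⟨F, hF, hfF⟩ := hf
  have hx : Tendsto (fun z : 𝕜 => z * x) (𝓝 0) (𝓝 0) := by
    simpa using (continuous_mul_const x).tendsto 0
  refine ⟨fun z => x ^ 3 * F (z * x), ?_, ?_⟩
  · have : AnalyticAt 𝕜 F (0 * x) := by rwa [zero_mul]
    fun_prop
  · filter_upwards [hx.eventually hfF] with z hz
    rw [hz]
    ring

theorem iteratedDeriv_two [CharZero 𝕜] [CompleteSpace 𝕜] (hf : HasQuadraticJet f a b c) :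
    iteratedDeriv 2 f 0 = 2 * c := by
  obtain ⟨F, hF, hfF⟩ := hf
  have hF₂ : ContDiffAt 𝕜 2 F 0 := hF.contDiffAt
  have hpoly : iteratedDeriv 2 (fun z => a + b * z + c * z ^ 2) 0 = 2 * c := by
    rw [iteratedDeriv_fun_add (by fun_prop) (by fun_prop),
      iteratedDeriv_fun_add (by fun_prop) (by fun_prop), iteratedDeriv_const_mul_field,
      iteratedDeriv_const_mul_field, iteratedDeriv_fun_pow_zero]
    simp [iteratedDeriv_succ, mul_comm]
  have hrem : iteratedDeriv 2 (fun z => z ^ 3 * F z) 0 = 0 :=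
    (natCast_le_analyticOrderAt_iff_iteratedDeriv_eq_zero (by fun_prop)).1
      ((natCast_le_analyticOrderAt (n := 3) (by fun_prop)).2 ⟨F, hF, by simp⟩) 2 (by norm_num)
  rw [hfF.iteratedDeriv_eq 2, iteratedDeriv_fun_add (by fun_prop) (by fun_prop), hpoly, hrem,
    add_zero]

end HasQuadraticJet

end QuadraticJet

theorem exists_exp_eq_one_add_add_sq_mul :
    ∃ h : ℝ → ℝ, HasQuadraticJet h (1 / 2) (1 / 6) (1 / 24) ∧
      ∀ u, Real.exp u = 1 + u + u ^ 2 * h u := by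
  obtain ⟨E, hE, hexp⟩ := (analyticAt_rexp (x := 0)).exists_eq_sum_add_pow_mul 5
  refine ⟨fun u => 1 / 2 + 1 / 6 * u + 1 / 24 * u ^ 2 + u ^ 3 * E u, ⟨E, hE, .rfl⟩, fun u => ?_⟩
  rw [hexp u]
  simp only [iteratedDeriv_eq_iterate, Real.iter_deriv_exp, Real.exp_zero, smul_eq_mul, mul_one,
    Finset.sum_range_succ, Finset.sum_range_zero, Nat.factorial]
  push_cast
  ring

theorem td_eq_inv {h : ℝ → ℝ} (hexp : ∀ u, Real.exp u = 1 + u + u ^ 2 * h u) (u : ℝ) :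
    td u = (1 + u * h u)⁻¹ := by
  rcases eq_or_ne u 0 with rfl | hu
  · simp [td]
  · rw [td, if_neg hu, show Real.exp u - 1 = u * (1 + u * h u) by rw [hexp]; ring,
      div_mul_cancel_left₀ hu]

theorem psi_eq_neg_mul_inv {h : ℝ → ℝ} (h0 : h 0 = 1 / 2)
    (hexp : ∀ u, Real.exp u = 1 + u + u ^ 2 * h u) (u : ℝ) :
    psi u = -h u * (1 + u * h u)⁻¹ := by
  rcases eq_or_ne u 0 with rfl | hu
  · norm_num [psi, h0]
  · have hne : 1 + u * h u ≠ 0 := by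
      intro h1
      have : Real.exp u = Real.exp 0 := by rw [hexp, Real.exp_zero]; linear_combination u * h1
      exact hu (Real.exp_injective this)
    rw [psi, if_neg hu, td_eq_inv hexp]
    field_simp
    ring

theorem td_hasQuadraticJet : HasQuadraticJet td 1 (-1 / 2) (1 / 12) := by
  obtain ⟨h, hh, hexp⟩ := exists_exp_eq_one_add_add_sq_mul
  rw [funext (td_eq_inv hexp)]
  convert (hh.const_add_id_mul 1).inv one_ne_zero using 1 <;> norm_num

theorem psi_hasQuadraticJet : HasQuadraticJet psi (-1 / 2) (1 / 12) 0 := by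
  obtain ⟨h, hh, hexp⟩ := exists_exp_eq_one_add_add_sq_mul
  rw [funext (psi_eq_neg_mul_inv hh.apply_zero hexp)]
  convert hh.neg.mul ((hh.const_add_id_mul 1).inv one_ne_zero) using 1 <;> norm_num

/-- Chern-root form of the Kulikov surface computation
(Theorem 3.18).  The second Taylor coefficient at 0 of
`ε ↦ td(ε x₁)·td(ε x₂)·ψ(ε t)` equals `−(e₁(x)² + e₂(x) + e₁(x)·t)/24`
with `e₁(x) = x₁ + x₂`, `e₂(x) = x₁ x₂`. -/
theorem kulikov_surface_taylor (x₁ x₂ t : ℝ) :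
    iteratedDeriv 2 (fun ε : ℝ => td (ε * x₁) * td (ε * x₂) * psi (ε * t)) 0
        / (Nat.factorial 2 : ℝ)
      = -(((x₁ + x₂) ^ 2 + x₁ * x₂ + (x₁ + x₂) * t) / 24) := by
  have hjet := ((td_hasQuadraticJet.comp_mul_const x₁).mul
    (td_hasQuadraticJet.comp_mul_const x₂)).mul (psi_hasQuadraticJet.comp_mul_const t)
  rw [hjet.iteratedDeriv_two, Nat.factorial_two]
  ring
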